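/- Let p be a prime with p ∉ {2, 3}, k ≥ 1, b a positive integer with gcd(b·pᵏ, 6) = 1 and gcd(b, p) = 1, and n ≥ 1. Let γ = (γ₁, γ₂) : ℤ/b × T*ₙ → (ℤ/pᵏ)ˣ be a homomorphism whose restriction γ₂ to the factor T*ₙ is trivial (resp. let τ = (τ₁, τ₂) : ℤ/b × O*ₙ → (ℤ/pᵏ)ˣ be a homomorphism whose restriction τ₂ to the factor O*ₙ is trivial). Then restriction of crossed homomorphisms along the inclusion ℤ/b ↪ ℤ/b × T*ₙ induces an isomorphism Der_γ(ℤ/b × T*ₙ, ℤ/pᵏ) ≅ Der_{γ₁}(ℤ/b, ℤ/pᵏ) (resp. restriction along ℤ/b ↪ ℤ/b × O*ₙ induces an isomorphism Der_τ(ℤ/b × O*ₙ, ℤ/pᵏ) ≅ Der_{τ₁}(ℤ/b, ℤ/pᵏ)). -/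

import Mathlib

/-- The quaternion group of order 8, with `i = a 1`, `j = xa 0`, `k = i * j = xa 3`. -/
abbrev Q8 := QuaternionGroup 2

/-- The underlying function of the automorphism of `Q₈` sending `i ↦ j`, `j ↦ k`, `k ↦ i`. -/
def tauFun : Q8 → Q8
  | .a i => if i = 0 then .a 0 else if i = 1 then .xa 0 else if i = 2 then .a 2 else .xa 2
  | .xa i => if i = 0 then .xa 3 else if i = 1 then .a 3 else if i = 2 then .xa 1 else .a 1

/-- The inverse function, sending `i ↦ k`, `j ↦ i`, `k ↦ j`. -/
def tauInvFun : Q8 → Q8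
  | .a i => if i = 0 then .a 0 else if i = 1 then .xa 3 else if i = 2 then .a 2 else .xa 1
  | .xa i => if i = 0 then .a 1 else if i = 1 then .xa 2 else if i = 2 then .a 3 else .xa 0

/-- The automorphism `τ` of `Q₈` with `τ i = j`, `τ j = k`, `τ k = i`. -/
def tau : MulAut Q8 :=
  { toFun := tauFun
    invFun := tauInvFun
    left_inv := by decide
    right_inv := by decide
    map_mul' := by decide }

theorem tau_pow_three : tau ^ 3 = 1 :=
  DFunLike.ext _ _ (by decide)

/-- The action `α : ℤ/3 → Aut Q₈` sending the generator `1` of `ℤ/3` to `τ`. -/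
def alphaQ8 : Multiplicative (ZMod 3) →* MulAut Q8 :=
  AddMonoidHom.toMultiplicativeLeft
    (ZMod.lift 3 ⟨zmultiplesHom (Additive (MulAut Q8)) (Additive.ofMul tau), by
      show ((3 : ℕ) : ℤ) • Additive.ofMul tau = 0
      have h3 : tau ^ ((3 : ℕ) : ℤ) = 1 := by rw [zpow_natCast, tau_pow_three]
      rw [← ofMul_zpow, h3, ofMul_one]⟩)

/-- The reduction map `ℤ/3ⁿ → ℤ/3` (junk when `n = 0`). -/
def redMod3 (n : ℕ) : ZMod (3 ^ n) →+ ZMod 3 :=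
  if h : n = 0 then 0
  else (ZMod.castHom (dvd_pow_self 3 h) (ZMod 3)).toAddMonoidHom

/-- The action `αₙ : ℤ/3ⁿ → Aut Q₈`, the composite of the reduction map `ℤ/3ⁿ → ℤ/3`
with `α`. -/
def alphaQ8n (n : ℕ) : Multiplicative (ZMod (3 ^ n)) →* MulAut Q8 :=
  alphaQ8.comp (AddMonoidHom.toMultiplicative (redMod3 n))

/-- The generalized binary tetrahedral group `T*ₙ = Q₈ ⋊_{αₙ} ℤ/3ⁿ`. -/
abbrev Tstar (n : ℕ) := Q8 ⋊[alphaQ8n n] Multiplicative (ZMod (3 ^ n))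


/-- Generators `X, P, Q, R` of the generalized binary octahedral group. -/
inductive OGen : Type
  | X : OGen
  | P : OGen
  | Q : OGen
  | R : OGen
  deriving DecidableEq

open OGen FreeGroup in
/-- The relations of the generalized binary octahedral group `O*ₙ`:
`X^(3^n) = P⁴ = 1`, `P² = Q² = R²`, `PQP⁻¹ = Q⁻¹`, `XPX⁻¹ = Q`, `XQX⁻¹ = PQ`,
`RXR⁻¹ = X⁻¹`, `RPR⁻¹ = QP`, `RQR⁻¹ = Q⁻¹`. -/
def ostarRels (n : ℕ) : Set (FreeGroup OGen) :=
  { of X ^ 3 ^ n,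
    of P ^ 4,
    of P ^ 2 * (of Q ^ 2)⁻¹,
    of Q ^ 2 * (of R ^ 2)⁻¹,
    of P * of Q * (of P)⁻¹ * of Q,
    of X * of P * (of X)⁻¹ * (of Q)⁻¹,
    of X * of Q * (of X)⁻¹ * (of P * of Q)⁻¹,
    of R * of X * (of R)⁻¹ * of X,
    of R * of P * (of R)⁻¹ * (of Q * of P)⁻¹,
    of R * of Q * (of R)⁻¹ * of Q }

/-- The generalized binary octahedral group `O*ₙ`, given by the presentation above. -/
abbrev Ostar (n : ℕ) := PresentedGroup (ostarRels n)


/-- For an action `α : H → Aut A` of a group `H` on an additive abelian group `A`,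
`Der α` is the abelian group (under pointwise addition) of crossed homomorphisms
`d : H → A`, i.e. maps satisfying `d (h₁ * h₂) = d h₁ + α h₁ (d h₂)`. -/
def Der {H A : Type*} [Group H] [AddCommGroup A] (α : H →* Multiplicative (AddAut A)) :
    AddSubgroup (H → A) where
  carrier := {d | ∀ h₁ h₂ : H, d (h₁ * h₂) = d h₁ + Multiplicative.toAdd (α h₁) (d h₂)}
  zero_mem' := by intro h₁ h₂; simp
  add_mem' := by
    intro d₁ d₂ hd₁ hd₂ h₁ h₂
    simp only [Pi.add_apply, hd₁ h₁ h₂, hd₂ h₁ h₂, map_add]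
    abel
  neg_mem' := by
    intro d hd h₁ h₂
    simp only [Pi.neg_apply, hd h₁ h₂, map_neg]
    abel

/-- A homomorphism `γ : H → (ℤ/a)ˣ` regarded as an action of `H` on `ℤ/a`
by multiplication. -/
def unitsAction {H : Type*} [Group H] {a : ℕ} (γ : H →* (ZMod a)ˣ) :
    H →* Multiplicative (AddAut (ZMod a)) :=
  (DistribMulAction.toAddAut (ZMod a)ˣ (ZMod a)).comp γ

/-!
On the factor `G₂` where the action is trivial, a crossed homomorphism `d` on `G₁ × G₂` is a
homomorphism `G₂ → ℤ/pᵏ`. Both `T*ₙ` and `O*ₙ` are generated by elements whose orders divide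
`2ᵃ 3ᵇ`, which is prime to `pᵏ`, so this homomorphism vanishes. Hence `d (z, t) = d (z, 1)`:
`d` is determined by its restriction to `G₁`, and every crossed homomorphism on `G₁` extends
along the projection `G₁ × G₂ → G₁`.
-/

namespace MonoidHom

variable {G H : Type*} [Group G] [Group H]

theorem map_eq_one_of_pow_eq_one_of_coprime (ψ : G →* H) {g : G} {m : ℕ} (hg : g ^ m = 1)
    (hm : m.Coprime (Nat.card H)) : ψ g = 1 := by
  rw [← orderOf_eq_one_iff]
  exact Nat.eq_one_of_dvd_coprimes hm
    (orderOf_dvd_of_pow_eq_one (by rw [← map_pow, hg, map_one])) (orderOf_dvd_natCard _)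

theorem eq_one_of_coprime_card (ψ : G →* H) (h : (Nat.card G).Coprime (Nat.card H)) : ψ = 1 :=
  ext fun _ => ψ.map_eq_one_of_pow_eq_one_of_coprime pow_card_eq_one' h

theorem eq_one_of_closure_eq_top_of_pow_eq_one (ψ : G →* H) {S : Set G}
    (hS : Subgroup.closure S = ⊤) {m : ℕ} (hpow : ∀ s ∈ S, s ^ m = 1)
    (hm : m.Coprime (Nat.card H)) : ψ = 1 :=
  eq_of_eqOn_dense hS fun s hs => ψ.map_eq_one_of_pow_eq_one_of_coprime (hpow s hs) hm

end MonoidHom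

theorem Nat.Coprime.two_pow_mul_three_pow {c : ℕ} (h : Nat.Coprime 6 c) (a b : ℕ) :
    Nat.Coprime (2 ^ a * 3 ^ b) c :=
  .mul_left (.pow_left a (.coprime_dvd_left (by decide : 2 ∣ 6) h))
    (.pow_left b (.coprime_dvd_left (by decide : 3 ∣ 6) h))

theorem Tstar.card (n : ℕ) : Nat.card (Tstar n) = 8 * 3 ^ n := by
  rw [SemidirectProduct.card, Nat.card_eq_fintype_card, QuaternionGroup.card,
    Nat.card_congr Multiplicative.toAdd, Nat.card_zmod]

theorem Tstar.monoidHom_eq_one {H : Type*} [Group H] {n : ℕ} (ψ : Tstar n →* H)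
    (h : Nat.Coprime 6 (Nat.card H)) : ψ = 1 :=
  ψ.eq_one_of_coprime_card <| by
    rw [Tstar.card]
    exact h.two_pow_mul_three_pow 3 n

namespace Ostar

open OGen

variable {n : ℕ}

theorem of_X_pow : (PresentedGroup.of X : Ostar n) ^ 3 ^ n = 1 := by
  rw [PresentedGroup.of, ← map_pow]
  exact PresentedGroup.one_of_mem (by simp [ostarRels])

theorem of_P_pow_four : (PresentedGroup.of P : Ostar n) ^ 4 = 1 := by
  rw [PresentedGroup.of, ← map_pow]
  exact PresentedGroup.one_of_mem (by simp [ostarRels])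

theorem of_P_sq : (PresentedGroup.of P : Ostar n) ^ 2 = PresentedGroup.of Q ^ 2 := by
  rw [PresentedGroup.of, PresentedGroup.of, ← map_pow, ← map_pow]
  exact PresentedGroup.mk_eq_mk_of_mul_inv_mem (by simp [ostarRels])

theorem of_Q_sq : (PresentedGroup.of Q : Ostar n) ^ 2 = PresentedGroup.of R ^ 2 := by
  rw [PresentedGroup.of, PresentedGroup.of, ← map_pow, ← map_pow]
  exact PresentedGroup.mk_eq_mk_of_mul_inv_mem (by simp [ostarRels])

theorem of_pow_four_mul_three_pow (x : OGen) :
    (PresentedGroup.of x : Ostar n) ^ (4 * 3 ^ n) = 1 := by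
  have hP : (PresentedGroup.of P : Ostar n) ^ 4 = 1 := of_P_pow_four
  have hQ : (PresentedGroup.of Q : Ostar n) ^ 4 = 1 := by
    rw [show 4 = 2 * 2 from rfl, pow_mul, ← of_P_sq, ← pow_mul, hP]
  have hR : (PresentedGroup.of R : Ostar n) ^ 4 = 1 := by
    rw [show 4 = 2 * 2 from rfl, pow_mul, ← of_Q_sq, ← pow_mul, hQ]
  cases x with
  | X => rw [mul_comm, pow_mul, of_X_pow, one_pow]
  | P => rw [pow_mul, hP, one_pow]
  | Q => rw [pow_mul, hQ, one_pow]
  | R => rw [pow_mul, hR, one_pow]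

theorem monoidHom_eq_one {H : Type*} [Group H] (ψ : Ostar n →* H)
    (h : Nat.Coprime 6 (Nat.card H)) : ψ = 1 :=
  ψ.eq_one_of_closure_eq_top_of_pow_eq_one (PresentedGroup.closure_range_of _)
    (by rintro _ ⟨x, rfl⟩; exact of_pow_four_mul_three_pow x) (h.two_pow_mul_three_pow 2 n)

end Ostar

namespace Der

variable {H K A : Type*} [Group H] [Group K] [AddCommGroup A]
  {α : H →* Multiplicative (AddAut A)} {d : H → A}

theorem apply_one (hd : d ∈ Der α) : d 1 = 0 := by
  have h := hd 1 1
  rw [mul_one, map_one] at h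
  exact left_eq_add.mp h

theorem comp_mem (hd : d ∈ Der α) (f : K →* H) : d ∘ f ∈ Der (α.comp f) := fun x y => by
  simp only [Function.comp_apply, map_mul, MonoidHom.comp_apply]
  exact hd (f x) (f y)

def toMonoidHom (hd : d ∈ Der α) (f : K →* H) (hf : ∀ x, α (f x) = 1) :
    K →* Multiplicative A where
  toFun x := .ofAdd (d (f x))
  map_one' := by rw [map_one, apply_one hd, ofAdd_zero]
  map_mul' x y := by rw [map_mul, hd, hf, ← ofAdd_add]; rfl

theorem apply_eq_zero_of_trivial (hd : d ∈ Der α) (f : K →* H) (hf : ∀ x, α (f x) = 1)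
    (hK : ∀ ψ : K →* Multiplicative A, ψ = 1) (x : K) : d (f x) = 0 :=
  congrArg Multiplicative.toAdd (DFunLike.congr_fun (hK (toMonoidHom hd f hf)) x)

variable {G₁ G₂ : Type*} [Group G₁] [Group G₂] {α : G₁ × G₂ →* Multiplicative (AddAut A)}

theorem comp_inl_comp_fst (hα : ∀ t, α (1, t) = 1) :
    (α.comp (MonoidHom.inl G₁ G₂)).comp (MonoidHom.fst G₁ G₂) = α :=
  MonoidHom.ext fun zt => by
    rw [MonoidHom.comp_apply, MonoidHom.comp_apply, ← mul_one (α (MonoidHom.inl _ _ _)),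
      ← hα zt.2, ← map_mul]
    simp

theorem apply_mk_eq_apply_mk_one (hα : ∀ t, α (1, t) = 1)
    (hG₂ : ∀ ψ : G₂ →* Multiplicative A, ψ = 1) {d : G₁ × G₂ → A} (hd : d ∈ Der α)
    (z : G₁) (t : G₂) : d (z, t) = d (z, 1) := by
  have h := hd (z, 1) (1, t)
  have h0 : d (1, t) = 0 := apply_eq_zero_of_trivial hd (MonoidHom.inr G₁ G₂) hα hG₂ t
  rwa [Prod.mk_mul_mk, mul_one, one_mul, h0, map_zero, add_zero] at h

def prodEquivOfTrivial (hα : ∀ t, α (1, t) = 1) (hG₂ : ∀ ψ : G₂ →* Multiplicative A, ψ = 1) :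
    Der α ≃+ Der (α.comp (MonoidHom.inl G₁ G₂)) where
  toFun d := ⟨d.1 ∘ MonoidHom.inl G₁ G₂, comp_mem d.2 _⟩
  invFun e := ⟨e.1 ∘ MonoidHom.fst G₁ G₂, by
    simpa only [comp_inl_comp_fst hα] using comp_mem e.2 (MonoidHom.fst G₁ G₂)⟩
  left_inv d := Subtype.ext <| funext fun zt =>
    (apply_mk_eq_apply_mk_one hα hG₂ d.2 zt.1 zt.2).symm
  right_inv _ := rfl
  map_add' _ _ := rfl

end Der

theorem unitsAction_apply_eq_one {H : Type*} [Group H] {a : ℕ} {γ : H →* (ZMod a)ˣ} {h : H}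
    (hγ : γ h = 1) : unitsAction γ h = 1 := by
  rw [unitsAction, MonoidHom.comp_apply, hγ, map_one]

theorem der_restrict_iso_of_trivial_general (p : ℕ) (k : ℕ) (b : ℕ) (h6 : Nat.gcd (b * p ^ k) 6 = 1)
    (n : ℕ)
    (γ : Multiplicative (ZMod b) × Tstar n →* (ZMod (p ^ k))ˣ)
    (hγ₂ : ∀ t : Tstar n, γ (1, t) = 1)
    (τ : Multiplicative (ZMod b) × Ostar n →* (ZMod (p ^ k))ˣ)
    (hτ₂ : ∀ t : Ostar n, τ (1, t) = 1) :
    (∃ e : Der (unitsAction γ) ≃+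
        Der (unitsAction (γ.comp (MonoidHom.inl (Multiplicative (ZMod b)) (Tstar n)))),
      ∀ (d : Der (unitsAction γ)) (z : Multiplicative (ZMod b)),
        (e d : Multiplicative (ZMod b) → ZMod (p ^ k)) z =
          (d : Multiplicative (ZMod b) × Tstar n → ZMod (p ^ k)) (z, 1)) ∧
    (∃ e : Der (unitsAction τ) ≃+
        Der (unitsAction (τ.comp (MonoidHom.inl (Multiplicative (ZMod b)) (Ostar n)))),
      ∀ (d : Der (unitsAction τ)) (z : Multiplicative (ZMod b)),
        (e d : Multiplicative (ZMod b) → ZMod (p ^ k)) z =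
          (d : Multiplicative (ZMod b) × Ostar n → ZMod (p ^ k)) (z, 1)) := by
  have hcard : Nat.Coprime 6 (Nat.card (Multiplicative (ZMod (p ^ k)))) := by
    rw [Nat.card_congr Multiplicative.toAdd, Nat.card_zmod]
    exact (Nat.Coprime.coprime_mul_left h6).symm
  exact ⟨⟨Der.prodEquivOfTrivial (fun t => unitsAction_apply_eq_one (hγ₂ t))
      fun ψ => Tstar.monoidHom_eq_one ψ hcard, fun _ _ => rfl⟩,
    ⟨Der.prodEquivOfTrivial (fun t => unitsAction_apply_eq_one (hτ₂ t))
      fun ψ => Ostar.monoidHom_eq_one ψ hcard, fun _ _ => rfl⟩⟩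

/-- Let p ∉ {2,3} be a prime, k ≥ 1, b with gcd(b·pᵏ,6) = 1 and gcd(b,p) = 1, n ≥ 1.
If γ : ℤ/b × T*ₙ → (ℤ/pᵏ)ˣ restricts trivially to T*ₙ (resp. τ : ℤ/b × O*ₙ → (ℤ/pᵏ)ˣ
restricts trivially to O*ₙ), then restriction of crossed homomorphisms along the inclusion
of ℤ/b induces an isomorphism Der_γ(ℤ/b × T*ₙ, ℤ/pᵏ) ≅ Der_{γ₁}(ℤ/b, ℤ/pᵏ)
(resp. Der_τ(ℤ/b × O*ₙ, ℤ/pᵏ) ≅ Der_{τ₁}(ℤ/b, ℤ/pᵏ)). -/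
theorem der_restrict_iso_of_trivial (p : ℕ) (hp : p.Prime) (hp2 : p ≠ 2) (hp3 : p ≠ 3)
    (k : ℕ) (hk : 1 ≤ k) (b : ℕ) (hb : 0 < b) (h6 : Nat.gcd (b * p ^ k) 6 = 1)
    (hbp : Nat.Coprime b p) (n : ℕ) (hn : 1 ≤ n)
    (γ : Multiplicative (ZMod b) × Tstar n →* (ZMod (p ^ k))ˣ)
    (hγ₂ : ∀ t : Tstar n, γ (1, t) = 1)
    (τ : Multiplicative (ZMod b) × Ostar n →* (ZMod (p ^ k))ˣ)
    (hτ₂ : ∀ t : Ostar n, τ (1, t) = 1) :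
    (∃ e : Der (unitsAction γ) ≃+
        Der (unitsAction (γ.comp (MonoidHom.inl (Multiplicative (ZMod b)) (Tstar n)))),
      ∀ (d : Der (unitsAction γ)) (z : Multiplicative (ZMod b)),
        (e d : Multiplicative (ZMod b) → ZMod (p ^ k)) z =
          (d : Multiplicative (ZMod b) × Tstar n → ZMod (p ^ k)) (z, 1)) ∧
    (∃ e : Der (unitsAction τ) ≃+
        Der (unitsAction (τ.comp (MonoidHom.inl (Multiplicative (ZMod b)) (Ostar n)))),
      ∀ (d : Der (unitsAction τ)) (z : Multiplicative (ZMod b)),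
        (e d : Multiplicative (ZMod b) → ZMod (p ^ k)) z =
          (d : Multiplicative (ZMod b) × Ostar n → ZMod (p ^ k)) (z, 1)) :=
  der_restrict_iso_of_trivial_general p k b h6 n γ hγ₂ τ hτ₂
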